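/- In any scheme satisfying the independence, uniformity, message and correctness constraints, the message length satisfies L_X ≥ L, i.e., each user must send at least L symbols of 𝔽_q per L input symbols. -/

import Mathlib

open Finset
open scoped Classical

namespace WeakSecureSummation

noncomputable section

/-- Probability that random variable `X` takes value `a`, w.r.t. pmf `p`. -/
def pr {Ω α : Type*} [Fintype Ω] [DecidableEq α] (p : Ω → ℝ) (X : Ω → α) (a : α) : ℝ :=
  ∑ ω, if X ω = a then p ω else 0

/-- Shannon entropy of `X` in `q`-ary units. -/
def H {Ω α : Type*} [Fintype Ω] [Fintype α] [DecidableEq α]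
    (q : ℕ) (p : Ω → ℝ) (X : Ω → α) : ℝ :=
  -∑ a : α, pr p X a * (Real.log (pr p X a) / Real.log (q : ℝ))

/-- Conditional entropy `H(X | Y)` in `q`-ary units. -/
def Hc {Ω α β : Type*} [Fintype Ω] [Fintype α] [DecidableEq α] [Fintype β] [DecidableEq β]
    (q : ℕ) (p : Ω → ℝ) (X : Ω → α) (Y : Ω → β) : ℝ :=
  H q p (fun ω => (X ω, Y ω)) - H q p Y

/-- Conditional mutual information `I(X ; Y | Z)` in `q`-ary units. -/
def MIc {Ω α β γ : Type*} [Fintype Ω] [Fintype α] [DecidableEq α] [Fintype β] [DecidableEq β]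
    [Fintype γ] [DecidableEq γ] (q : ℕ) (p : Ω → ℝ) (X : Ω → α) (Y : Ω → β) (Z : Ω → γ) : ℝ :=
  Hc q p X Z + Hc q p Y Z - Hc q p (fun ω => (X ω, Y ω)) Z

/-- A secure-summation scheme for `K` users over the finite field `F`:
input length `L`, message length `LX`, source-key length `LZ`, a finite sample
space `Ω` with pmf `p`, inputs `W k`, source key `ZS`, keys `Z k` (with value
types `ZT k`), and messages `X k`. -/
structure Scheme (K : ℕ) (F : Type) [Field F] [Fintype F] [DecidableEq F] where
  L : ℕ
  LX : ℕ
  LZ : ℕ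
  Ω : Type
  [finΩ : Fintype Ω]
  p : Ω → ℝ
  W : Fin K → Ω → Fin L → F
  ZS : Ω → Fin LZ → F
  ZT : Fin K → Type
  [finZT : ∀ k, Fintype (ZT k)]
  [decZT : ∀ k, DecidableEq (ZT k)]
  Z : ∀ k, Ω → ZT k
  X : Fin K → Ω → Fin LX → F

attribute [instance] Scheme.finΩ Scheme.finZT Scheme.decZT

variable {K : ℕ} {F : Type} [Field F] [Fintype F] [DecidableEq F]

/-- The sum of all inputs. -/
def Scheme.sumW (C : Scheme K F) : C.Ω → (Fin C.L → F) := fun ω => ∑ k, C.W k ω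

/-- The tuple of inputs `(W k)_{k ∈ A}`. -/
def Scheme.Wtup (C : Scheme K F) (A : Finset (Fin K)) :
    C.Ω → ({x // x ∈ A} → (Fin C.L → F)) :=
  fun ω k => C.W k.1 ω

/-- The tuple of keys `(Z k)_{k ∈ A}`. -/
def Scheme.Ztup (C : Scheme K F) (A : Finset (Fin K)) :
    C.Ω → ((k : {x // x ∈ A}) → C.ZT k.1) :=
  fun ω k => C.Z k.1 ω

/-- The tuple `((W k, Z k))_{k ∈ A}`. -/
def Scheme.WZtup (C : Scheme K F) (A : Finset (Fin K)) :
    C.Ω → ((k : {x // x ∈ A}) → (Fin C.L → F) × C.ZT k.1) :=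
  fun ω k => (C.W k.1 ω, C.Z k.1 ω)

/-- The tuple of all messages `(X 1, …, X K)`. -/
def Scheme.Xall (C : Scheme K F) : C.Ω → (Fin K → Fin C.LX → F) := fun ω k => C.X k ω

/-- The tuple of all inputs `(W 1, …, W K)`. -/
def Scheme.Wall (C : Scheme K F) : C.Ω → (Fin K → Fin C.L → F) := fun ω k => C.W k ω

/-- `p` is a valid probability mass function. -/
def Scheme.ValidP (C : Scheme K F) : Prop :=
  (∀ ω, 0 ≤ C.p ω) ∧ (∑ ω, C.p ω = 1)

/-- Inputs are uniform on `F^L`, mutually independent, and independent of the source key. -/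
def Scheme.IndepUnif (C : Scheme K F) : Prop :=
  (∀ (k : Fin K) (a : Fin C.L → F), pr C.p (C.W k) a = ((Fintype.card F : ℝ) ^ C.L)⁻¹) ∧
  (∀ w : Fin K → Fin C.L → F, pr C.p C.Wall w = ∏ k, pr C.p (C.W k) (w k)) ∧
  (∀ (w : Fin K → Fin C.L → F) (z : Fin C.LZ → F),
    pr C.p (fun ω => (C.Wall ω, C.ZS ω)) (w, z) = pr C.p C.Wall w * pr C.p C.ZS z)

/-- Each key is a deterministic function of the source key, and each message is a
deterministic function of the own input and key. -/
def Scheme.Det (C : Scheme K F) : Prop :=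
  (∀ k, ∃ f : (Fin C.LZ → F) → C.ZT k, ∀ ω, C.Z k ω = f (C.ZS ω)) ∧
  (∀ k, ∃ g : (Fin C.L → F) → C.ZT k → (Fin C.LX → F), ∀ ω, C.X k ω = g (C.W k ω) (C.Z k ω))

/-- Correctness: the sum of inputs is decodable from all messages. -/
def Scheme.Correct (C : Scheme K F) : Prop :=
  Hc (Fintype.card F) C.p C.sumW C.Xall = 0

/-- All the model constraints except security. -/
def Scheme.Good (C : Scheme K F) : Prop :=
  C.ValidP ∧ C.IndepUnif ∧ C.Det ∧ C.Correct

/-- Security for a single pair: colluding with users in `T`, nothing is revealed about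
the inputs in `S` beyond the sum and what the colluders know. -/
def Scheme.SecureFor (C : Scheme K F) (S T : Finset (Fin K)) : Prop :=
  MIc (Fintype.card F) C.p (C.Wtup S) C.Xall (fun ω => (C.sumW ω, C.WZtup T ω)) = 0

/-- A security pattern: families of security input sets and colluding user sets. -/
structure Pattern (K M N : ℕ) where
  S : Fin M → Finset (Fin K)
  T : Fin N → Finset (Fin K)

/-- The family of security input sets is monotone (closed under subsets). -/
def Pattern.MonoS {K M N : ℕ} (P : Pattern K M N) : Prop :=
  ∀ (m : Fin M) (A : Finset (Fin K)), A ⊆ P.S m → ∃ m', P.S m' = A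

/-- The family of colluding user sets is monotone (closed under subsets). -/
def Pattern.MonoT {K M N : ℕ} (P : Pattern K M N) : Prop :=
  ∀ (n : Fin N) (A : Finset (Fin K)), A ⊆ P.T n → ∃ n', P.T n' = A

/-- A valid security pattern: monotone families, nonempty union of security sets,
and every colluding set of size at most `K - 2`. -/
def Pattern.Valid {K M N : ℕ} (P : Pattern K M N) : Prop :=
  P.MonoS ∧ P.MonoT ∧ (∃ m, (P.S m).Nonempty) ∧ (∀ n, (P.T n).card ≤ K - 2)

/-- The scheme is secure for every pair of the pattern. -/
def Scheme.Secure {M N : ℕ} (C : Scheme K F) (P : Pattern K M N) : Prop :=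
  ∀ m n, C.SecureFor (P.S m) (P.T n)

/-- Implicit security input set `S_I`. -/
def Pattern.SI {K M N : ℕ} (P : Pattern K M N) : Finset (Fin K) :=
  (Finset.univ.filter fun u =>
      ∃ m n, (P.S m ∪ P.T n).card = K - 1 ∧ Finset.univ \ (P.S m ∪ P.T n) = {u}) \
    Finset.univ.biUnion P.S

/-- Total security input set `S̄`. -/
def Pattern.Sbar {K M N : ℕ} (P : Pattern K M N) : Finset (Fin K) :=
  Finset.univ.biUnion P.S ∪ P.SI

/-- `A_{m,n} = (S_m ∪ T_n) ∩ S̄`. -/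
def Pattern.A {K M N : ℕ} (P : Pattern K M N) (m : Fin M) (n : Fin N) : Finset (Fin K) :=
  (P.S m ∪ P.T n) ∩ P.Sbar

/-- `a* = max_{m,n} |A_{m,n}|`. -/
def Pattern.aStar {K M N : ℕ} (P : Pattern K M N) : ℕ :=
  Finset.univ.sup fun mn : Fin M × Fin N => (P.A mn.1 mn.2).card

/-- `Q`: union of `S_m ∪ T_n` over all pairs attaining `a*`. -/
def Pattern.Q {K M N : ℕ} (P : Pattern K M N) : Finset (Fin K) :=
  Finset.univ.biUnion fun mn : Fin M × Fin N =>
    if (P.A mn.1 mn.2).card = P.aStar then P.S mn.1 ∪ P.T mn.2 else ∅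

/-- Feasibility for the linear program LP(𝒮,𝒯): variables `b k` for `k ∉ S̄`,
nonnegative, with `∑_{k ∈ [K] \ (S_m ∪ T_n)} b k ≥ 1` for every maximal pair. -/
def Pattern.LPFeasible {K M N : ℕ} (P : Pattern K M N) (b : Fin K → ℝ) : Prop :=
  (∀ k, k ∉ P.Sbar → 0 ≤ b k) ∧ (∀ k ∈ P.Sbar, b k = 0) ∧
  ∀ m n, (P.A m n).card = P.aStar → 1 ≤ ∑ k ∈ Finset.univ \ (P.S m ∪ P.T n), b k

/-- LP objective: `max_{m,n : |A_{m,n}| = a*} ∑_{k ∈ T_n \ S̄} b k`. -/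
def Pattern.LPObj {K M N : ℕ} (P : Pattern K M N) (b : Fin K → ℝ) : ℝ :=
  sSup {x : ℝ | ∃ m n, (P.A m n).card = P.aStar ∧ x = ∑ k ∈ P.T n \ P.Sbar, b k}

/-- `b*`: optimal value of the linear program. -/
def Pattern.bStar {K M N : ℕ} (P : Pattern K M N) : ℝ :=
  sInf {v : ℝ | ∃ b, P.LPFeasible b ∧ P.LPObj b = v}

/-- Achievability of key rate `R` for pattern `P`, with a given finite field `F`. -/
def AchWith (K M N : ℕ) (P : Pattern K M N) (R : ℝ) (F : Type)
    [Field F] [Fintype F] [DecidableEq F] : Prop :=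
  ∃ C : Scheme K F, 1 ≤ C.L ∧ C.Good ∧ C.Secure P ∧ (C.LZ : ℝ) / (C.L : ℝ) ≤ R

/-- Achievability of key rate `R`: some finite field (i.e. some prime power `q`)
admits a valid, correct, secure scheme of key rate at most `R`. -/
def Achievable {K M N : ℕ} (P : Pattern K M N) (R : ℝ) : Prop :=
  ∃ (F : Type) (i1 : Field F) (i2 : Fintype F) (i3 : DecidableEq F),
    @AchWith K M N P R F i1 i2 i3

/-- The optimal key rate `R*`: infimum of achievable rates. -/
def optRate {K M N : ℕ} (P : Pattern K M N) : ℝ :=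
  sInf {R : ℝ | Achievable P R}

end
end WeakSecureSummation

/-!
Write `Z k = f k Z_Σ` and `X k = g k (W k) (Z k)`, and fix a value `z` of the source key with
positive probability. By independence and uniformity, for every `w` the outcome "user `k₀` holds
`w`, every other user holds `0`, and `Z_Σ = z`" has positive probability. On these outcomes every
message except `X k₀ = g k₀ w (f k₀ z)` is constant, while the sum of the inputs is `w`. Zero conditional entropy makes the sum a function of the messages on the
support, so `w ↦ g k₀ w (f k₀ z)` is injective and `q ^ L ≤ q ^ L_X`.
-/

namespace WeakSecureSummation

section Probability

variable {Ω α β : Type*} [Fintype Ω] [DecidableEq α] [DecidableEq β] {p : Ω → ℝ}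

lemma pr_nonneg (hp : ∀ ω, 0 ≤ p ω) (X : Ω → α) (a : α) : 0 ≤ pr p X a :=
  sum_nonneg fun ω _ => by split_ifs <;> simp [hp ω]

lemma exists_pos_of_pr_pos {X : Ω → α} {a : α} (h : 0 < pr p X a) :
    ∃ ω, 0 < p ω ∧ X ω = a := by
  obtain ⟨ω, -, hω⟩ := exists_lt_of_sum_lt (s := univ) (f := fun _ => (0 : ℝ))
    (by simpa [pr] using h)
  split_ifs at hω with hX
  · exact ⟨ω, hω, hX⟩
  · exact absurd hω (lt_irrefl 0)

lemma le_pr_apply (hp : ∀ ω, 0 ≤ p ω) (X : Ω → α) (ω : Ω) : p ω ≤ pr p X (X ω) := by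
  have := single_le_sum (f := fun ω' => if X ω' = X ω then p ω' else 0)
    (fun ω' _ => by split_ifs <;> simp [hp ω']) (mem_univ ω)
  simpa [pr] using this

lemma sum_pr [Fintype α] (X : Ω → α) : ∑ a, pr p X a = ∑ ω, p ω := by
  simp only [pr]
  rw [sum_comm]
  simp

lemma exists_pr_pos [Fintype α] (hp : ∑ ω, p ω = 1) (X : Ω → α) : ∃ a, 0 < pr p X a := by
  by_contra! h
  have : ∑ a, pr p X a ≤ 0 := sum_nonpos fun a _ => h a
  rw [sum_pr, hp] at this
  linarith

lemma pr_pair_le_right (hp : ∀ ω, 0 ≤ p ω) (A : Ω → α) (B : Ω → β) (a : α) (b : β) :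
    pr p (fun ω => (A ω, B ω)) (a, b) ≤ pr p B b :=
  sum_le_sum fun ω _ => by
    split_ifs with hab hb
    · rfl
    · exact absurd (congrArg Prod.snd hab) hb
    · exact hp ω
    · rfl

lemma sum_pr_pair_left [Fintype α] (A : Ω → α) (B : Ω → β) (b : β) :
    ∑ a, pr p (fun ω => (A ω, B ω)) (a, b) = pr p B b := by
  simp only [pr]
  rw [sum_comm]
  refine sum_congr rfl fun ω _ => ?_
  by_cases hb : B ω = b <;> simp [hb, Prod.ext_iff]

lemma Hc_eq_sum [Fintype α] [Fintype β] (q : ℕ) (A : Ω → α) (B : Ω → β) :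
    Hc q p A B = ∑ ab : α × β, pr p (fun ω => (A ω, B ω)) ab *
      (Real.log (pr p B ab.2) - Real.log (pr p (fun ω => (A ω, B ω)) ab)) / Real.log q := by
  have hB : ∑ b, pr p B b * (Real.log (pr p B b) / Real.log q) =
      ∑ ab : α × β, pr p (fun ω => (A ω, B ω)) ab * (Real.log (pr p B ab.2) / Real.log q) := by
    rw [Fintype.sum_prod_type_right]
    refine sum_congr rfl fun b _ => ?_
    dsimp only
    rw [← sum_mul, sum_pr_pair_left]
  rw [Hc, H, H, hB, neg_sub_neg, ← sum_sub_distrib]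
  exact sum_congr rfl fun ab _ => by ring

lemma pr_pair_eq_of_Hc_eq_zero [Fintype α] [Fintype β] {q : ℕ} (hq : 1 < q)
    (hp : ∀ ω, 0 ≤ p ω) {A : Ω → α} {B : Ω → β} (h : Hc q p A B = 0) {a : α} {b : β}
    (hab : 0 < pr p (fun ω => (A ω, B ω)) (a, b)) :
    pr p (fun ω => (A ω, B ω)) (a, b) = pr p B b := by
  have hlogq : 0 < Real.log q := Real.log_pos (by exact_mod_cast hq)
  have hterm : ∀ ab : α × β, 0 ≤ pr p (fun ω => (A ω, B ω)) ab *
      (Real.log (pr p B ab.2) - Real.log (pr p (fun ω => (A ω, B ω)) ab)) / Real.log q := by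
    rintro ⟨a', b'⟩
    rcases (pr_nonneg hp (fun ω => (A ω, B ω)) (a', b')).eq_or_lt with h0 | hpos
    · rw [← h0]; simp
    · have := Real.log_le_log hpos (pr_pair_le_right hp A B a' b')
      exact div_nonneg (mul_nonneg hpos.le (by linarith)) hlogq.le
  rw [Hc_eq_sum, sum_eq_zero_iff_of_nonneg fun ab _ => hterm ab] at h
  have hlog := h (a, b) (mem_univ _)
  rw [div_eq_zero_iff, mul_eq_zero, sub_eq_zero] at hlog
  rcases hlog with (h0 | hlog) | h0
  · exact absurd h0 hab.ne'
  · exact Real.log_injOn_pos hab (hab.trans_le (pr_pair_le_right hp A B a b)) hlog.symm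
  · exact absurd h0 hlogq.ne'

lemma eq_of_Hc_eq_zero [Fintype α] [Fintype β] {q : ℕ} (hq : 1 < q) (hp : ∀ ω, 0 ≤ p ω)
    {A : Ω → α} {B : Ω → β} (h : Hc q p A B = 0) {ω ω' : Ω} (hω : 0 < p ω) (hω' : 0 < p ω')
    (hB : B ω = B ω') : A ω = A ω' := by
  by_contra hA
  have hpos : 0 < pr p (fun ω => (A ω, B ω)) (A ω, B ω) := hω.trans_le (le_pr_apply hp _ ω)
  have hpos' : 0 < pr p (fun ω => (A ω, B ω)) (A ω', B ω) := by
    rw [hB]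
    exact hω'.trans_le (le_pr_apply hp _ ω')
  have hsum : pr p (fun ω => (A ω, B ω)) (A ω, B ω) + pr p (fun ω => (A ω, B ω)) (A ω', B ω) ≤
      pr p B (B ω) := by
    rw [← sum_pr_pair_left A B,
      ← sum_pair (f := fun a => pr p (fun ω => (A ω, B ω)) (a, B ω)) hA]
    exact sum_le_sum_of_subset_of_nonneg (subset_univ _)
      fun a _ _ => pr_nonneg hp _ (a, B ω)
  linarith [pr_pair_eq_of_Hc_eq_zero hq hp h hpos, pr_pair_eq_of_Hc_eq_zero hq hp h hpos']

end Probability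

namespace Scheme

variable {K : ℕ} {F : Type} [Field F] [Fintype F] [DecidableEq F] (C : Scheme K F)

lemma pr_Wall_pos (hC : C.IndepUnif) (w : Fin K → Fin C.L → F) : 0 < pr C.p C.Wall w := by
  rw [hC.2.1 w]
  refine prod_pos fun k _ => ?_
  rw [hC.1 k (w k)]
  have : (0 : ℝ) < Fintype.card F := Nat.cast_pos.mpr Fintype.card_pos
  positivity

lemma exists_outcome (hC : C.IndepUnif) (w : Fin K → Fin C.L → F)
    {z : Fin C.LZ → F} (hz : 0 < pr C.p C.ZS z) :
    ∃ ω, 0 < C.p ω ∧ C.Wall ω = w ∧ C.ZS ω = z := by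
  have hwz : 0 < pr C.p (fun ω => (C.Wall ω, C.ZS ω)) (w, z) := by
    rw [hC.2.2 w z]
    exact mul_pos (C.pr_Wall_pos hC w) hz
  obtain ⟨ω, hω, hWZ⟩ := exists_pos_of_pr_pos hwz
  exact ⟨ω, hω, congrArg Prod.fst hWZ, congrArg Prod.snd hWZ⟩

theorem exists_injective_message (hC : C.Good) (k₀ : Fin K) :
    ∃ φ : (Fin C.L → F) → (Fin C.LX → F), Function.Injective φ := by
  obtain ⟨⟨hp, hpsum⟩, hIU, ⟨hZ, hX⟩, hcorr⟩ := hC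
  choose f hf using hZ
  choose g hg using hX
  obtain ⟨z, hz⟩ := exists_pr_pos hpsum C.ZS
  choose ω hω hW hZS using fun w => C.exists_outcome hIU (Pi.single k₀ w) hz
  have hsum : ∀ w, C.sumW (ω w) = w := fun w => by
    change ∑ k, C.Wall (ω w) k = w
    simp [hW]
  have hXk : ∀ w k, C.X k (ω w) = g k ((Pi.single k₀ w : Fin K → Fin C.L → F) k) (f k z) := fun w k => by
    rw [hg, hf, hZS, ← hW]
    rfl
  refine ⟨fun w => g k₀ w (f k₀ z), fun w w' hww' => ?_⟩
  have hmsg : C.Xall (ω w) = C.Xall (ω w') := by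
    funext k
    change C.X k (ω w) = C.X k (ω w')
    rw [hXk, hXk]
    rcases eq_or_ne k k₀ with rfl | hk
    · simpa using hww'
    · simp [hk]
  simpa [hsum] using eq_of_Hc_eq_zero Fintype.one_lt_card hp hcorr (hω w) (hω w') hmsg

end Scheme

end WeakSecureSummation

open WeakSecureSummation in
theorem message_length_lower_bound_general {K : ℕ} (hK : 2 ≤ K)
    {F : Type} [Field F] [Fintype F] [DecidableEq F]
    (C : Scheme K F) (hGood : C.Good) :
    C.L ≤ C.LX := by
  obtain ⟨φ, hφ⟩ := C.exists_injective_message hGood ⟨0, by omega⟩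
  have hcard := Fintype.card_le_of_injective φ hφ
  simp only [Fintype.card_fun, Fintype.card_fin] at hcard
  exact (Nat.pow_le_pow_iff_right Fintype.one_lt_card).mp hcard

open WeakSecureSummation in
/-- the message length satisfies `L_X ≥ L`. -/
theorem message_length_lower_bound {K : ℕ} (hK : 2 ≤ K)
    {F : Type} [Field F] [Fintype F] [DecidableEq F]
    (C : Scheme K F) (hL : 1 ≤ C.L) (hGood : C.Good) :
    C.L ≤ C.LX :=
  message_length_lower_bound_general hK C hGood
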